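/- Consider the pentatopes τ₁,…,τ₄ of the prism subdivision with tags t₁ = (x_D,x_C,x_B,x_A,x_D')₀, t₂ = (x_C,x_B,x_A,x_D',x_C')₀, t₃ = (x_B,x_A,x_D',x_C',x_B')₀, t₄ = (x_A,x_D',x_C',x_B',x_A')₀. For each consecutive pair (t_i, t_{i+1}), i = 1,2,3, after one application of the bisection rule, the child of t_i containing the shared hyperface and the first child of t_{i+1} are reflected neighbors. -/

import Mathlib

/-- A tagged pentatope: an ordered 5-tuple of vertices together with a type γ ∈ {0,1,2,3}. -/
structure TP (V : Type*) where
  v : Fin 5 → V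
  γ : Fin 4

/-- The vertex permutation used in Stevenson's reflection, depending on the type. -/
def refPerm (γ : Fin 4) : Fin 5 → Fin 5 :=
  if γ = 0 then ![4, 3, 2, 1, 0]
  else if γ = 1 then ![4, 1, 3, 2, 0]
  else ![4, 1, 2, 3, 0]

/-- The reflection of a tagged pentatope. -/
def TP.reflect {V : Type*} (t : TP V) : TP V := ⟨t.v ∘ refPerm t.γ, t.γ⟩

variable {V : Type*} [AddCommGroup V] [Module ℝ V]

/-- The midpoint x' = (x₀ + x₄)/2 of the refinement edge. -/
noncomputable def TP.mid (t : TP V) : V := midpoint ℝ (t.v 0) (t.v 4)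

/-- First child of the bisection rule. -/
noncomputable def TP.child1 (t : TP V) : TP V :=
  ⟨![t.v 0, t.mid, t.v 1, t.v 2, t.v 3], t.γ + 1⟩

/-- Second child of the bisection rule. -/
noncomputable def TP.child2 (t : TP V) : TP V :=
  ⟨if t.γ = 0 then ![t.v 4, t.mid, t.v 3, t.v 2, t.v 1]
    else if t.γ = 1 then ![t.v 4, t.mid, t.v 1, t.v 3, t.v 2]
    else ![t.v 4, t.mid, t.v 1, t.v 2, t.v 3], t.γ + 1⟩

/-- Two vertex orderings agree in all but (at most) one position. -/
def agreeButOne {V : Type*} (u w : Fin 5 → V) : Prop :=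
  ∃ i : Fin 5, ∀ j : Fin 5, j ≠ i → u j = w j

/-- Reflected neighbors: same type, share a hyperface (four common vertices), and the
vertex order of t' matches that of t or of its reflection t_R in all but one
position. -/
def ReflNbr {V : Type*} (t t' : TP V) : Prop :=
  t.γ = t'.γ ∧ (Set.range t.v ∩ Set.range t'.v).encard = 4 ∧
    (agreeButOne t.v t'.v ∨ agreeButOne t.reflect.v t'.v)

/-- ψ_t : ℝ³ → ℝ⁴, appending the coordinate t. -/
def lift (t : ℝ) (x : Fin 3 → ℝ) : Fin 4 → ℝ := Fin.snoc x t

/-!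
Each `tᵢ₊₁` arises from `tᵢ` by dropping the first vertex and appending a new last one, so the
two pentatopes share the face `F` spanned by their middle four vertices, and both refinement
edges are vertical edges of the prism, over distinct base vertices. Bisecting `tᵢ` (type 0) gives
a type-1 child whose reflection is `(s₁, m, s₂, s₃, s₄)`, while the first child of `tᵢ₊₁` is
`(s₁, m', s₂, s₃, s₄)`. The two midpoints `m, m'` lie on the intermediate time level
`(r + s) / 2`, hence outside `F` and apart from each other, so the children meet exactly in `F`.
-/

theorem TP.reflNbr_child2_child1 {w s₁ s₂ s₃ s₄ w' : V} (hface : [s₁, s₂, s₃, s₄].Nodup)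
    (hm : midpoint ℝ w s₄ ∉ ({s₁, s₂, s₃, s₄} : Set V))
    (hm' : midpoint ℝ s₁ w' ∉ ({s₁, s₂, s₃, s₄} : Set V))
    (hmm' : midpoint ℝ w s₄ ≠ midpoint ℝ s₁ w') :
    ReflNbr (TP.child2 ⟨![w, s₁, s₂, s₃, s₄], 0⟩) (TP.child1 ⟨![s₁, s₂, s₃, s₄, w'], 0⟩) := by
  set F : Set V := {s₁, s₂, s₃, s₄}
  have hrange₂ :
      Set.range (TP.child2 ⟨![w, s₁, s₂, s₃, s₄], 0⟩).v = insert (midpoint ℝ w s₄) F := by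
    ext x
    simp only [TP.child2, TP.mid, ↓reduceIte, Matrix.cons_val, Matrix.cons_val_zero,
      Matrix.cons_val_one, zero_add, Matrix.range_cons, Matrix.range_empty, Set.union_empty,
      Set.union_singleton, Set.union_insert, Set.mem_insert_iff, Set.mem_singleton_iff, F]
    tauto
  have hrange₁ :
      Set.range (TP.child1 ⟨![s₁, s₂, s₃, s₄, w'], 0⟩).v = insert (midpoint ℝ s₁ w') F := by
    ext x
    simp only [TP.child1, TP.mid, Matrix.cons_val, Matrix.cons_val_zero, Matrix.cons_val_one,
      zero_add, Matrix.range_cons, Matrix.range_empty, Set.union_empty, Set.union_singleton,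
      Set.union_insert, Set.mem_insert_iff, Set.mem_singleton_iff, F]
    tauto
  have hF : F.encard = 4 := by
    obtain ⟨⟨h₁₂, h₁₃, h₁₄⟩, ⟨h₂₃, h₂₄⟩, h₃₄⟩ := by simpa using hface
    exact Set.encard_eq_four.2 ⟨_, _, _, _, h₁₂, h₁₃, h₁₄, h₂₃, h₂₄, h₃₄, rfl⟩
  refine ⟨rfl, ?_, Or.inr ⟨1, fun j hj => ?_⟩⟩
  · rw [hrange₂, hrange₁, Set.insert_inter_of_notMem (by simp [hm, hmm']),
      Set.inter_insert_of_notMem hm', Set.inter_self, hF]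
  · fin_cases j <;> simp_all [TP.reflect, refPerm, TP.child1, TP.child2, TP.mid]

@[simp]
theorem lift_inj {t u : ℝ} {x y : Fin 3 → ℝ} : lift t x = lift u y ↔ x = y ∧ t = u :=
  Fin.snoc_inj

theorem midpoint_lift (t u : ℝ) (x : Fin 3 → ℝ) :
    midpoint ℝ (lift t x) (lift u x) = lift (midpoint ℝ t u) x := by
  ext i
  refine Fin.lastCases ?_ (fun j => ?_) i <;>
    simp only [lift, pi_midpoint_apply, Fin.snoc_last, Fin.snoc_castSucc, midpoint_self]

theorem reflNbr_child2_child1_of_vertical_edges {r s : ℝ} (hrs : r ≠ s) {p q : Fin 3 → ℝ}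
    (hpq : p ≠ q) {y z : Fin 4 → ℝ} (hy : y ∈ Set.range (lift r) ∪ Set.range (lift s))
    (hz : z ∈ Set.range (lift r) ∪ Set.range (lift s)) (hface : [lift r q, y, z, lift s p].Nodup) :
    ReflNbr (TP.child2 ⟨![lift r p, lift r q, y, z, lift s p], 0⟩)
      (TP.child1 ⟨![lift r q, y, z, lift s p, lift s q], 0⟩) := by
  have hμr : midpoint ℝ r s ≠ r := mt (midpoint_eq_left_iff ℝ).1 hrs
  have hμs : midpoint ℝ r s ≠ s := mt (midpoint_eq_right_iff ℝ).1 hrs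
  have hmid : ∀ x, lift (midpoint ℝ r s) x ∉ ({lift r q, y, z, lift s p} : Set (Fin 4 → ℝ)) := by
    rcases hy with ⟨u, rfl⟩ | ⟨u, rfl⟩ <;> rcases hz with ⟨v, rfl⟩ | ⟨v, rfl⟩ <;>
      simp [hμr, hμs]
  refine TP.reflNbr_child2_child1 hface ?_ ?_ ?_ <;> simp only [midpoint_lift]
  exacts [hmid p, hmid q, by simp [hpq]]

theorem consecutive_tagged_pentatopes_children_reflected_neighbors
    (a b c d : Fin 3 → ℝ) (hT : AffineIndependent ℝ ![a, b, c, d])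
    (r s : ℝ) (hrs : r < s)
    (xA xB xC xD xA' xB' xC' xD' : Fin 4 → ℝ)
    (hA : xA = lift r a) (hB : xB = lift r b) (hC : xC = lift r c) (hD : xD = lift r d)
    (hA' : xA' = lift s a) (hB' : xB' = lift s b) (hC' : xC' = lift s c)
    (hD' : xD' = lift s d)
    (t₁ t₂ t₃ t₄ : TP (Fin 4 → ℝ))
    (h₁ : t₁ = ⟨![xD, xC, xB, xA, xD'], 0⟩)
    (h₂ : t₂ = ⟨![xC, xB, xA, xD', xC'], 0⟩)
    (h₃ : t₃ = ⟨![xB, xA, xD', xC', xB'], 0⟩)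
    (h₄ : t₄ = ⟨![xA, xD', xC', xB', xA'], 0⟩) :
    ReflNbr t₁.child2 t₂.child1 ∧ ReflNbr t₂.child2 t₃.child1 ∧
      ReflNbr t₃.child2 t₄.child1 := by
  subst_vars
  obtain ⟨⟨hab, hac, had⟩, ⟨hbc, hbd⟩, hcd⟩ :
      (a ≠ b ∧ a ≠ c ∧ a ≠ d) ∧ (b ≠ c ∧ b ≠ d) ∧ c ≠ d := by
    simpa [List.ofFn_succ] using List.nodup_ofFn.2 hT.injective
  refine ⟨reflNbr_child2_child1_of_vertical_edges hrs.ne hcd.symm ?_ ?_ ?_,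
    reflNbr_child2_child1_of_vertical_edges hrs.ne hbc.symm ?_ ?_ ?_,
    reflNbr_child2_child1_of_vertical_edges hrs.ne hab.symm ?_ ?_ ?_⟩ <;>
    simp [hrs.ne, hab, hac, had, hbc, hbd, hcd, eq_comm]
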